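/- Let 0 < s ≤ 1 and let a = (a_k)_{k≥0}, b = (b_k)_{k≥0} be strictly increasing sequences of positive integers with a_0 = b_0 = 1, a_j − a_i ≤ b_j − b_i whenever i ≤ j, a_k/b_k → 0 and b_k/a_{k+1} → 0 as k → ∞. Then the s-dimensional lower Hewitt–Stromberg measure of F(s,a,b) vanishes: U^s(F(s,a,b)) = 0. -/

import Mathlib

open Filter MeasureTheory Metric Set ENNReal Classical
open scoped Topology

noncomputable section

/-- `coverNumber δ A` is the smallest number of sets of diameter at most `δ`
needed to cover `A`. -/
noncomputable def coverNumber {X : Type*} [MetricSpace X] (δ : ℝ) (A : Set X) : ℕ :=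
  sInf {n : ℕ | ∃ f : Fin n → Set X, A ⊆ ⋃ i, f i ∧ ∀ i, Metric.diam (f i) ≤ δ}

/-- Lower box dimension. -/
noncomputable def lowerBoxDim {X : Type*} [MetricSpace X] (A : Set X) : ℝ :=
  Filter.liminf (fun δ : ℝ => Real.log (coverNumber δ A : ℝ) / (-Real.log δ)) (𝓝[>] (0:ℝ))

/-- Upper box dimension. -/
noncomputable def upperBoxDim {X : Type*} [MetricSpace X] (A : Set X) : ℝ :=
  Filter.limsup (fun δ : ℝ => Real.log (coverNumber δ A : ℝ) / (-Real.log δ)) (𝓝[>] (0:ℝ))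

/-- Lower modified box dimension: the infimum over countable covers of `A` by bounded
sets of the supremum of the lower box dimensions of the pieces. -/
noncomputable def lowerMBDim {X : Type*} [MetricSpace X] (A : Set X) : ℝ :=
  sInf {d : ℝ | ∃ E : ℕ → Set X, A ⊆ ⋃ i, E i ∧
    ∀ i, Bornology.IsBounded (E i) ∧ lowerBoxDim (E i) ≤ d}

/-- The packing pre-premeasure at scale `δ`: supremum of `Σ (2 rᵢ)^α` over countable
families of pairwise disjoint closed balls centred in `A` with radii in `(0, δ]`. -/
noncomputable def packingPreAt {X : Type*} [MetricSpace X] (α δ : ℝ) (A : Set X) : ℝ≥0∞ :=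
  ⨆ (t : Set ℕ) (x : ℕ → X) (r : ℕ → ℝ)
    (_ : ∀ i ∈ t, x i ∈ A ∧ 0 < r i ∧ r i ≤ δ)
    (_ : t.PairwiseDisjoint fun i => Metric.closedBall (x i) (r i)),
    ∑' i : t, ENNReal.ofReal ((2 * r (i : ℕ)) ^ α)

/-- The `α`-dimensional packing premeasure. -/
noncomputable def packingPre {X : Type*} [MetricSpace X] (α : ℝ) (A : Set X) : ℝ≥0∞ :=
  ⨅ (δ : ℝ) (_ : 0 < δ), packingPreAt α δ A

/-- The `α`-dimensional packing measure. -/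
noncomputable def packingMeasure {X : Type*} [MetricSpace X] (α : ℝ) (A : Set X) : ℝ≥0∞ :=
  ⨅ (E : ℕ → Set X) (_ : A ⊆ ⋃ i, E i), ∑' i, packingPre α (E i)

/-- The packing dimension. -/
noncomputable def packingDim {X : Type*} [MetricSpace X] (A : Set X) : ℝ :=
  sInf {α : ℝ | 0 ≤ α ∧ packingMeasure α A = 0}

/-- The Assouad dimension. -/
noncomputable def assouadDim {X : Type*} [MetricSpace X] (A : Set X) : ℝ :=
  sInf {α : ℝ | 0 ≤ α ∧ ∃ c ρ : ℝ, 0 < c ∧ 0 < ρ ∧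
    ∀ r R : ℝ, 0 < r → r < R → R ≤ ρ → ∀ x ∈ A,
      (coverNumber r (Metric.ball x R ∩ A) : ℝ) ≤ c * (R / r) ^ α}

/-- The bijection between finite binary words and positive integers:
`f(ε) = 1` and `f(w_1 ⋯ w_n) = 2^n + Σ_{i=1}^n w_i 2^{n-i}`. -/
def findex : List Bool → ℕ
  | [] => 1
  | v :: w => findex w + (if v then 2 else 1) * 2 ^ w.length

/-- The length of the interval `V_w`, computed on the *reversed* word (last letter
first), so that the parent of `v :: w` is `w`.  If there exists `m < n` with
`n = a_{f(w_1 ⋯ w_m)}` then the length is `α^{-b_{f(w_1⋯w_m)}}` where `α = 2^{1/γ}`;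
otherwise it is `α⁻¹` times the length of the parent interval. -/
noncomputable def Vlen' (γ : ℝ) (a b : ℕ → ℕ) : List Bool → ℝ
  | [] => 1
  | v :: w =>
    if h : ∃ m, m < w.length + 1 ∧ w.length + 1 = a (findex (((v :: w).reverse).take m)) then
      (((2:ℝ) ^ ((1:ℝ)/γ)) ^ (b (findex (((v :: w).reverse).take (Nat.find h)))))⁻¹
    else
      ((2:ℝ) ^ ((1:ℝ)/γ))⁻¹ * Vlen' γ a b w

/-- The left endpoint of `V_w`, computed on the reversed word: a child is placed at the
extreme left of its parent if its last letter is `0`, at the extreme right if it is `1`. -/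
noncomputable def Vleft' (γ : ℝ) (a b : ℕ → ℕ) : List Bool → ℝ
  | [] => 0
  | v :: w =>
    if v then Vleft' γ a b w + Vlen' γ a b w - Vlen' γ a b (v :: w)
    else Vleft' γ a b w

/-- The closed interval `V_w` (for the word `w` in usual order). -/
noncomputable def Vset (γ : ℝ) (a b : ℕ → ℕ) (w : List Bool) : Set ℝ :=
  Set.Icc (Vleft' γ a b w.reverse) (Vleft' γ a b w.reverse + Vlen' γ a b w.reverse)

/-- `F_m(γ,a,b)`: union of the `V_w` over binary words of length `m`. -/
noncomputable def FsetN (γ : ℝ) (a b : ℕ → ℕ) (m : ℕ) : Set ℝ :=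
  ⋃ w ∈ {w : List Bool | w.length = m}, Vset γ a b w

/-- The set `F(γ,a,b) = ⋂_m F_m(γ,a,b)`. -/
noncomputable def Fset (γ : ℝ) (a b : ℕ → ℕ) : Set ℝ :=
  ⋂ m, FsetN γ a b m

/-- The lower Hewitt–Stromberg premeasure `Ū^α(E) = liminf_{δ → 0⁺} N_δ(E) δ^α`. -/
noncomputable def lowerHSpre (α : ℝ) (E : Set ℝ) : ℝ≥0∞ :=
  Filter.liminf (fun δ : ℝ => (coverNumber δ E : ℝ≥0∞) * ENNReal.ofReal (δ ^ α)) (𝓝[>] (0:ℝ))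

/-- The lower Hewitt–Stromberg measure: `U^α(A) = inf { Σᵢ Ū^α(Eᵢ) }` over countable
covers of `A` by bounded sets. -/
noncomputable def lowerHS (α : ℝ) (A : Set ℝ) : ℝ≥0∞ :=
  ⨅ (E : ℕ → Set ℝ) (_ : A ⊆ ⋃ i, E i) (_ : ∀ i, Bornology.IsBounded (E i)),
    ∑' i, lowerHSpre α (E i)


section Aux

lemma findex_bounds (l : List Bool) : 2 ^ l.length ≤ findex l ∧ findex l < 2 ^ (l.length + 1) := by
  induction l with
  | nil => simp [findex]
  | cons v w ih =>
    have e1 : (2:ℕ) ^ (w.length + 1) = 2 ^ w.length + 2 ^ w.length := by rw [pow_succ]; ring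
    have e2 : (2:ℕ) ^ (w.length + 1 + 1) = 2 ^ (w.length + 1) + 2 ^ (w.length + 1) := by
      rw [pow_succ 2 (w.length+1)]; ring
    cases v <;> simp [findex] <;> omega

lemma take_length_eq (u : List Bool) (m : ℕ) (h : m ≤ u.length) :
    (u.reverse.take m).length = m := by
  simp [List.length_take, h]

lemma findex_take_lb (u : List Bool) (m : ℕ) (h : m ≤ u.length) :
    2 ^ m ≤ findex (u.reverse.take m) := by
  have := (findex_bounds (u.reverse.take m)).1
  rwa [take_length_eq u m h] at this

lemma findex_take_ub (u : List Bool) (m : ℕ) (h : m ≤ u.length) :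
    findex (u.reverse.take m) < 2 ^ (m + 1) := by
  have := (findex_bounds (u.reverse.take m)).2
  rwa [take_length_eq u m h] at this

lemma findex_take_strictMono (u : List Bool) (m m' : ℕ) (hmm : m < m') (h : m' ≤ u.length) :
    findex (u.reverse.take m) < findex (u.reverse.take m') := by
  have h1 := findex_take_ub u m (le_trans (le_of_lt hmm) h)
  have h2 := findex_take_lb u m' h
  have : (2:ℕ) ^ (m+1) ≤ 2 ^ m' := Nat.pow_le_pow_right (by norm_num) hmm
  omega

lemma cons_reverse_take (u : List Bool) (v : Bool) (m : ℕ) (h : m ≤ u.length) :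
    ((v :: u).reverse.take m) = u.reverse.take m := by
  rw [List.reverse_cons]
  exact List.take_append_of_le_length (by simpa using h)

end Aux

section Seq

variable {a b : ℕ → ℕ}

lemma a_lb (ha : StrictMono a) (ha0 : a 0 = 1) : ∀ k, k + 1 ≤ a k := by
  intro k
  induction k with
  | zero => omega
  | succ k ih =>
    have h2 : a k < a (k+1) := ha (by omega)
    omega

lemma a_le_b (ha0 : a 0 = 1) (hb0 : b 0 = 1)
    (hapos : ∀ i, 0 < a i) (hbpos : ∀ i, 0 < b i)
    (hab : ∀ i j, i ≤ j → a j - a i ≤ b j - b i) : ∀ j, a j ≤ b j := by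
  intro j
  have := hab 0 j (Nat.zero_le j)
  have := hapos j; have := hbpos j
  omega

end Seq

/-- The exponent of the length of `V_w`. -/
noncomputable def eexp (a b : ℕ → ℕ) : List Bool → ℕ
  | [] => 0
  | v :: w =>
    if h : ∃ m, m < w.length + 1 ∧ w.length + 1 = a (findex (((v :: w).reverse).take m)) then
      b (findex (((v :: w).reverse).take (Nat.find h)))
    else
      eexp a b w + 1

lemma Vlen'_eq (s : ℝ) (a b : ℕ → ℕ) (u : List Bool) :
    Vlen' s a b u = (((2:ℝ) ^ ((1:ℝ)/s)) ^ (eexp a b u))⁻¹ := by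
  induction u with
  | nil => simp [Vlen', eexp]
  | cons v w ih =>
    by_cases h : ∃ m, m < w.length + 1 ∧ w.length + 1 = a (findex (((v :: w).reverse).take m))
    · rw [Vlen', dif_pos h, eexp, dif_pos h]
    · rw [Vlen', dif_neg h, eexp, dif_neg h, ih, pow_succ, mul_inv, mul_comm]
section ML

variable {a b : ℕ → ℕ}

/-- Main structural lemma about `eexp`. -/
lemma ML (ha : StrictMono a) (ha0 : a 0 = 1) (u : List Bool) :
    (eexp a b u = u.length ∧
      ∀ m, m < u.length → u.length < a (findex (u.reverse.take m)))
    ∨ (∃ m, m < u.length ∧ a (findex (u.reverse.take m)) ≤ u.length ∧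
        eexp a b u = b (findex (u.reverse.take m)) + (u.length - a (findex (u.reverse.take m))) ∧
        ∀ m', m < m' → m' < u.length → u.length < a (findex (u.reverse.take m'))) := by
  induction u with
  | nil => left; constructor
           · simp [eexp]
           · intro m hm; simp at hm
  | cons v u ih =>
    have hlen : (v :: u).length = u.length + 1 := rfl
    by_cases h : ∃ m, m < u.length + 1 ∧ u.length + 1 = a (findex (((v :: u).reverse).take m))
    · -- reset case
      right
      have hval : eexp a b (v :: u) = b (findex (((v :: u).reverse).take (Nat.find h))) := by
        rw [eexp, dif_pos h]
      obtain ⟨hm1, hm2⟩ := Nat.find_spec h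
      refine ⟨Nat.find h, by omega, ?_, ?_, ?_⟩
      · rw [hlen, ← hm2]
      · rw [hval, hlen, ← hm2]
        omega
      · intro m' hmm' hm'
        have hj : findex ((v :: u).reverse.take (Nat.find h)) < findex ((v :: u).reverse.take m') := by
          have h1 := findex_take_ub (v :: u) (Nat.find h) (by omega)
          have h2 := findex_take_lb (v :: u) m' (by omega)
          have : (2:ℕ) ^ (Nat.find h + 1) ≤ 2 ^ m' := Nat.pow_le_pow_right (by norm_num) hmm'
          omega
        have := ha hj
        omega
    · -- no reset
      have hstep : eexp a b (v :: u) = eexp a b u + 1 := by rw [eexp, dif_neg h]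
      have htop : ∀ m', m' < u.length + 1 → u.length + 1 < a (findex ((v :: u).reverse.take m')) → True := fun _ _ _ => trivial
      -- fact for m' arbitrary < u.length + 1, using ¬h
      have hne : ∀ m', m' < u.length + 1 →
          u.length + 1 ≠ a (findex ((v :: u).reverse.take m')) := by
        intro m' hm' heq
        exact h ⟨m', hm', heq⟩
      have hlast : u.length + 1 < a (findex ((v :: u).reverse.take u.length)) := by
        have h2 := findex_take_lb (v :: u) u.length (by omega)
        have h3 := a_lb ha ha0 (findex ((v :: u).reverse.take u.length))
        have h4 : u.length < 2 ^ u.length := (Nat.lt_two_pow_self (n := u.length))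
        have h5 := hne u.length (by omega)
        omega
      rcases ih with ⟨he, hall⟩ | ⟨m₀, hm₀, hle₀, he₀, htail₀⟩
      · left
        constructor
        · rw [hstep, he, hlen]
        · intro m hm
          rcases Nat.lt_or_ge m u.length with hc | hc
          · rw [hlen, cons_reverse_take u v m (by omega)]
            have := hall m hc
            have := hne m (by omega)
            rw [cons_reverse_take u v m (by omega)] at this
            omega
          · have : m = u.length := by omega
            subst this
            rw [hlen]; exact hlast
      · right
        refine ⟨m₀, by omega, ?_, ?_, ?_⟩
        · rw [hlen, cons_reverse_take u v m₀ (by omega)]; omega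
        · rw [hstep, he₀, hlen, cons_reverse_take u v m₀ (by omega)]
          omega
        · intro m' hmm' hm'
          rcases Nat.lt_or_ge m' u.length with hc | hc
          · rw [hlen, cons_reverse_take u v m' (by omega)]
            have := htail₀ m' hmm' hc
            have := hne m' (by omega)
            rw [cons_reverse_take u v m' (by omega)] at this
            omega
          · have : m' = u.length := by omega
            subst this
            rw [hlen]; exact hlast

lemma eexp_lower (ha : StrictMono a) (hb : StrictMono b) (ha0 : a 0 = 1)
    (hab : ∀ i j, i ≤ j → a j - a i ≤ b j - b i)
    (u : List Bool) (m : ℕ) (hm : m < u.length)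
    (hle : a (findex (u.reverse.take m)) ≤ u.length) :
    b (findex (u.reverse.take m)) + (u.length - a (findex (u.reverse.take m))) ≤ eexp a b u := by
  rcases ML ha ha0 (b := b) u with ⟨he, hall⟩ | ⟨m₀, hm₀, hle₀, he₀, htail₀⟩
  · have := hall m hm; omega
  · rcases Nat.lt_trichotomy m m₀ with hc | hc | hc
    · -- m < m₀ : j m ≤ j m₀
      have hj : findex (u.reverse.take m) < findex (u.reverse.take m₀) :=
        findex_take_strictMono u m m₀ hc (by omega)
      have h1 := hab (findex (u.reverse.take m)) (findex (u.reverse.take m₀)) (le_of_lt hj)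
      have h2 := ha.monotone (le_of_lt hj)
      have h3 := hb.monotone (le_of_lt hj)
      omega
    · subst hc; omega
    · have := htail₀ m hc hm; omega

lemma eexp_upper (ha : StrictMono a) (hb : StrictMono b) (ha0 : a 0 = 1) (hb0 : b 0 = 1)
    (hapos : ∀ i, 0 < a i) (hbpos : ∀ i, 0 < b i)
    (hab : ∀ i j, i ≤ j → a j - a i ≤ b j - b i)
    (u : List Bool) (m : ℕ) (hm : m ≤ u.length)
    (hgt : u.length < a (findex (u.reverse.take m))) :
    eexp a b u + 1 ≤ b (findex (u.reverse.take m)) := by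
  have haleb := a_le_b ha0 hb0 hapos hbpos hab
  rcases ML ha ha0 (b := b) u with ⟨he, hall⟩ | ⟨m₀, hm₀, hle₀, he₀, htail₀⟩
  · have := haleb (findex (u.reverse.take m)); omega
  · have hj : findex (u.reverse.take m₀) < findex (u.reverse.take m) := by
      have : a (findex (u.reverse.take m₀)) < a (findex (u.reverse.take m)) := by omega
      exact (ha.lt_iff_lt).mp this
    have h1 := hab (findex (u.reverse.take m₀)) (findex (u.reverse.take m)) (le_of_lt hj)
    have h2 := ha.monotone (le_of_lt hj)
    have h3 := hb.monotone (le_of_lt hj)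
    omega

lemma eexp_cons_le (ha : StrictMono a) (hb : StrictMono b) (ha0 : a 0 = 1) (hb0 : b 0 = 1)
    (hapos : ∀ i, 0 < a i) (hbpos : ∀ i, 0 < b i)
    (hab : ∀ i j, i ≤ j → a j - a i ≤ b j - b i)
    (v : Bool) (u : List Bool) :
    eexp a b u ≤ eexp a b (v :: u) := by
  by_cases h : ∃ m, m < u.length + 1 ∧ u.length + 1 = a (findex (((v :: u).reverse).take m))
  · rw [eexp, dif_pos h]
    obtain ⟨hm1, hm2⟩ := Nat.find_spec h
    set m₁ := Nat.find h with hm₁def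
    have hth : ((v :: u).reverse.take m₁) = u.reverse.take m₁ := cons_reverse_take u v m₁ (by omega)
    rw [hth]
    rw [hth] at hm2
    have := eexp_upper (b := b) ha hb ha0 hb0 hapos hbpos hab u m₁ (by omega) (by omega)
    omega
  · rw [eexp, dif_neg h]; omega

end ML
section Geom

variable {s : ℝ} {a b : ℕ → ℕ}

lemma Apos : (0:ℝ) < (2:ℝ) ^ ((1:ℝ)/s) := Real.rpow_pos_of_pos (by norm_num) _

lemma Aone (hs : 0 < s) (hs1 : s ≤ 1) : (1:ℝ) ≤ (2:ℝ) ^ ((1:ℝ)/s) := by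
  have h0 : (0:ℝ) ≤ 1/s := by positivity
  calc (1:ℝ) = (2:ℝ) ^ (0:ℝ) := by rw [Real.rpow_zero]
  _ ≤ (2:ℝ) ^ ((1:ℝ)/s) := Real.rpow_le_rpow_of_exponent_le (by norm_num) h0

lemma Vlen'_pos (u : List Bool) : 0 < Vlen' s a b u := by
  rw [Vlen'_eq]
  exact inv_pos.mpr (pow_pos Apos _)

lemma Vlen'_le_of_eexp_le (hs : 0 < s) (hs1 : s ≤ 1) {u w : List Bool}
    (h : eexp a b w ≤ eexp a b u) : Vlen' s a b u ≤ Vlen' s a b w := by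
  rw [Vlen'_eq, Vlen'_eq]
  apply inv_anti₀ (pow_pos Apos _)
  exact pow_le_pow_right₀ (Aone hs hs1) h

lemma Vlen'_cons_le (hs : 0 < s) (hs1 : s ≤ 1)
    (ha : StrictMono a) (hb : StrictMono b) (ha0 : a 0 = 1) (hb0 : b 0 = 1)
    (hapos : ∀ i, 0 < a i) (hbpos : ∀ i, 0 < b i)
    (hab : ∀ i j, i ≤ j → a j - a i ≤ b j - b i)
    (v : Bool) (u : List Bool) :
    Vlen' s a b (v :: u) ≤ Vlen' s a b u :=
  Vlen'_le_of_eexp_le hs hs1 (eexp_cons_le ha hb ha0 hb0 hapos hbpos hab v u)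

lemma Vset_snoc_subset (hs : 0 < s) (hs1 : s ≤ 1)
    (ha : StrictMono a) (hb : StrictMono b) (ha0 : a 0 = 1) (hb0 : b 0 = 1)
    (hapos : ∀ i, 0 < a i) (hbpos : ∀ i, 0 < b i)
    (hab : ∀ i j, i ≤ j → a j - a i ≤ b j - b i)
    (r : List Bool) (v : Bool) :
    Vset s a b (r ++ [v]) ⊆ Vset s a b r := by
  have hrev : (r ++ [v]).reverse = v :: r.reverse := by simp
  have hlen := Vlen'_cons_le hs hs1 ha hb ha0 hb0 hapos hbpos hab v r.reverse
  have hpos := Vlen'_pos (s := s) (a := a) (b := b) (v :: r.reverse)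
  unfold Vset
  rw [hrev]
  cases v
  · rw [Vleft']
    simp only [Bool.false_eq_true, if_false]
    exact Set.Icc_subset_Icc le_rfl (by linarith)
  · rw [Vleft']
    simp only [if_true]
    apply Set.Icc_subset_Icc <;> linarith

lemma Vset_append_subset (hs : 0 < s) (hs1 : s ≤ 1)
    (ha : StrictMono a) (hb : StrictMono b) (ha0 : a 0 = 1) (hb0 : b 0 = 1)
    (hapos : ∀ i, 0 < a i) (hbpos : ∀ i, 0 < b i)
    (hab : ∀ i j, i ≤ j → a j - a i ≤ b j - b i)
    (p q : List Bool) :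
    Vset s a b (p ++ q) ⊆ Vset s a b p := by
  induction q using List.reverseRecOn with
  | nil => simp
  | append_singleton q v ih =>
    have : p ++ (q ++ [v]) = (p ++ q) ++ [v] := by simp
    rw [this]
    exact subset_trans (Vset_snoc_subset hs hs1 ha hb ha0 hb0 hapos hbpos hab (p ++ q) v) ih

lemma Vset_take_subset (hs : 0 < s) (hs1 : s ≤ 1)
    (ha : StrictMono a) (hb : StrictMono b) (ha0 : a 0 = 1) (hb0 : b 0 = 1)
    (hapos : ∀ i, 0 < a i) (hbpos : ∀ i, 0 < b i)
    (hab : ∀ i j, i ≤ j → a j - a i ≤ b j - b i)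
    (w : List Bool) (j : ℕ) :
    Vset s a b w ⊆ Vset s a b (w.take j) := by
  conv_lhs => rw [← List.take_append_drop j w]
  exact Vset_append_subset hs hs1 ha hb ha0 hb0 hapos hbpos hab (w.take j) (w.drop j)

end Geom

section Encode

def listToNat : List Bool → ℕ
  | [] => 0
  | v :: l => 2 * listToNat l + (if v then 1 else 0)

def wordOf (m i : ℕ) : List Bool := List.ofFn fun t : Fin m => i.testBit t

@[simp] lemma wordOf_length (m i : ℕ) : (wordOf m i).length = m := by simp [wordOf]

lemma listToNat_lt : ∀ l : List Bool, listToNat l < 2 ^ l.length := by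
  intro l
  induction l with
  | nil => simp [listToNat]
  | cons v l ih =>
    have : (2:ℕ) ^ (v :: l).length = 2 ^ l.length + 2 ^ l.length := by
      simp [List.length_cons, pow_succ]; ring
    cases v <;> simp [listToNat] <;> omega

lemma testBit_listToNat : ∀ (l : List Bool) (t : ℕ) (ht : t < l.length),
    (listToNat l).testBit t = l.get ⟨t, ht⟩ := by
  intro l
  induction l with
  | nil => intro t ht; simp at ht
  | cons v l ih =>
    intro t ht
    cases t with
    | zero =>
      cases v <;> simp [listToNat, Nat.testBit_zero, Nat.mul_add_mod] <;> omega
    | succ t =>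
      have h2 : (2 * listToNat l + (if v then 1 else 0)) / 2 = listToNat l := by
        cases v <;> simp <;> omega
      rw [listToNat, Nat.testBit_succ, h2]
      simpa using ih t (by simpa using ht)

lemma wordOf_listToNat (l : List Bool) : wordOf l.length (listToNat l) = l := by
  apply List.ext_get
  · simp [wordOf]
  · intro t h1 h2
    simp only [wordOf, List.get_ofFn, Fin.coe_cast]
    exact testBit_listToNat l t h2

end Encode
section Cover

lemma coverNumber_le {A : Set ℝ} {δ : ℝ} (n : ℕ) (f : Fin n → Set ℝ)
    (hc : A ⊆ ⋃ i, f i) (hd : ∀ i, Metric.diam (f i) ≤ δ) : coverNumber δ A ≤ n :=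
  Nat.sInf_le ⟨f, hc, hd⟩

lemma coverNumber_empty (δ : ℝ) : coverNumber δ (∅ : Set ℝ) = 0 :=
  Nat.le_zero.mp (coverNumber_le 0 (fun i => i.elim0) (by simp) (fun i => i.elim0))

lemma lowerHSpre_empty (α : ℝ) : lowerHSpre α (∅ : Set ℝ) = 0 := by
  unfold lowerHSpre
  simp only [coverNumber_empty, Nat.cast_zero, zero_mul]
  exact Filter.liminf_const 0

/-- The part of the construction below the word `p`. -/
noncomputable def locF (s : ℝ) (a b : ℕ → ℕ) (p : List Bool) : Set ℝ :=
  ⋂ t : ℕ, ⋃ (q : List Bool) (_ : q.length = t), Vset s a b (p ++ q)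

lemma locF_subset_Vset (s : ℝ) (a b : ℕ → ℕ) (p : List Bool) :
    locF s a b p ⊆ Vset s a b p := by
  intro x hx
  have := Set.mem_iInter.mp hx 0
  simp only [Set.mem_iUnion] at this
  obtain ⟨q, hq, hxq⟩ := this
  rw [List.length_eq_zero_iff.mp hq] at hxq
  simpa using hxq

lemma rpow_calc (s : ℝ) (hs : 0 < s) (e : ℕ) :
    ((((2:ℝ) ^ ((1:ℝ)/s)) ^ e)⁻¹) ^ s = (((2:ℝ) ^ e)⁻¹ : ℝ) := by
  have h2 : (0:ℝ) ≤ 2 := by norm_num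
  rw [← Real.rpow_natCast ((2:ℝ) ^ ((1:ℝ)/s)) e, ← Real.rpow_mul h2,
    ← Real.rpow_neg h2, ← Real.rpow_natCast (2:ℝ) e, ← Real.rpow_neg h2,
    ← Real.rpow_mul h2]
  congr 1
  field_simp

end Cover
section KeyBound

variable {s : ℝ} {a b : ℕ → ℕ}

lemma lowerHSpre_locF (hs : 0 < s) (hs1 : s ≤ 1)
    (ha : StrictMono a) (hb : StrictMono b) (ha0 : a 0 = 1) (hb0 : b 0 = 1)
    (hapos : ∀ i, 0 < a i) (hbpos : ∀ i, 0 < b i)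
    (hab : ∀ i j, i ≤ j → a j - a i ≤ b j - b i)
    (p : List Bool) :
    lowerHSpre s (locF s a b p) ≤
      ENNReal.ofReal ((2:ℝ) ^ (a (findex p)) * ((2:ℝ) ^ (b (findex p)))⁻¹) := by
  set A := (2:ℝ) ^ ((1:ℝ)/s) with hAdef
  set k := findex p with hkdef
  set m := p.length with hmdef
  have hApos : (0:ℝ) < A := Apos
  have hAone : (1:ℝ) ≤ A := Aone hs hs1
  have hA1 : (1:ℝ) < A := by
    rw [hAdef]
    rw [Real.one_lt_rpow_iff_of_pos (by norm_num)]
    exact Or.inl ⟨one_lt_two, div_pos one_pos hs⟩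
  have hmk : m < a k := by
    have h1 : 2 ^ m ≤ k := by rw [hkdef, hmdef]; exact (findex_bounds p).1
    have h2 := a_lb ha ha0 k
    have h3 : m < 2 ^ m := (Nat.lt_two_pow_self (n := m))
    omega
  set δ : ℕ → ℝ := fun t => (A ^ (b k + t))⁻¹ with hδdef
  have hδpos : ∀ t, 0 < δ t := fun t => inv_pos.mpr (pow_pos hApos _)
  -- tendsto
  have htend : Filter.Tendsto δ Filter.atTop (𝓝[>] (0:ℝ)) := by
    have hδeq : δ = fun t => (A ^ (b k))⁻¹ * (A⁻¹) ^ t := by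
      funext t
      show (A ^ (b k + t))⁻¹ = (A ^ (b k))⁻¹ * (A⁻¹) ^ t
      rw [pow_add, mul_inv, inv_pow]
    have h0 : Filter.Tendsto (fun t : ℕ => (A⁻¹) ^ t) Filter.atTop (𝓝 (0:ℝ)) :=
      tendsto_pow_atTop_nhds_zero_of_lt_one (by positivity) (inv_lt_one_of_one_lt₀ hA1)
    have h1 : Filter.Tendsto δ Filter.atTop (𝓝 (0:ℝ)) := by
      rw [hδeq]
      simpa using h0.const_mul ((A ^ (b k))⁻¹)
    exact tendsto_nhdsWithin_of_tendsto_nhds_of_eventually_within _ h1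
      (Filter.Eventually.of_forall fun t => Set.mem_Ioi.mpr (hδpos t))
  -- pointwise bound
  have hkey : ∀ t : ℕ, (coverNumber (δ t) (locF s a b p) : ℝ≥0∞) * ENNReal.ofReal (δ t ^ s)
      ≤ ENNReal.ofReal ((2:ℝ) ^ (a k) * ((2:ℝ) ^ (b k))⁻¹) := by
    intro t
    set t' := (a k - m) + t with ht'def
    -- cover by descendants at relative depth t'
    have hcov : coverNumber (δ t) (locF s a b p) ≤ 2 ^ t' := by
      apply coverNumber_le (2 ^ t') (fun i => Vset s a b (p ++ wordOf t' i))
      · intro x hx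
        have := Set.mem_iInter.mp hx t'
        simp only [Set.mem_iUnion] at this
        obtain ⟨q, hq, hxq⟩ := this
        have hlt : listToNat q < 2 ^ t' := by
          have := listToNat_lt q; rwa [hq] at this
        refine Set.mem_iUnion.mpr ⟨⟨listToNat q, hlt⟩, ?_⟩
        have : wordOf t' (listToNat q) = q := by
          conv_lhs => rw [← hq]
          exact wordOf_listToNat q
        simpa [this] using hxq
      · intro i
        set q := wordOf t' (i : ℕ) with hqdef
        set u := (p ++ q).reverse with hudef
        have hulen : u.length = a k + t := by
          rw [hudef]; simp [hqdef, ← hmdef]; omega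
        have hutake : u.reverse.take m = p := by
          rw [hudef, List.reverse_reverse, hmdef]
          exact List.take_left
        have heexp : b k + t ≤ eexp a b u := by
          have := eexp_lower ha hb ha0 hab u m
            (by rw [hulen]; omega)
            (by rw [hutake, ← hkdef, hulen]; omega)
          rw [hutake, ← hkdef, hulen] at this
          omega
        have hVlen : Vlen' s a b u ≤ δ t := by
          rw [Vlen'_eq, ← hAdef, hδdef]
          apply inv_anti₀ (pow_pos hApos _)
          exact pow_le_pow_right₀ hAone heexp
        have hVpos : (0:ℝ) < Vlen' s a b u := Vlen'_pos u
        show Metric.diam (Vset s a b (p ++ q)) ≤ δ t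
        unfold Vset
        rw [← hudef, Real.diam_Icc (by linarith)]
        linarith
    -- now the numeric estimate
    have hδs : ENNReal.ofReal (δ t ^ s) = ENNReal.ofReal (((2:ℝ) ^ ((b k) + t))⁻¹) := by
      rw [hδdef, hAdef]
      congr 1
      exact rpow_calc s hs ((b k) + t)
    calc (coverNumber (δ t) (locF s a b p) : ℝ≥0∞) * ENNReal.ofReal (δ t ^ s)
        ≤ ((2:ℕ) ^ t' : ℕ) * ENNReal.ofReal (((2:ℝ) ^ ((b k) + t))⁻¹) := by
          rw [hδs]
          exact mul_le_mul' (by exact_mod_cast Nat.cast_le.mpr hcov) le_rfl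
      _ = ENNReal.ofReal ((2:ℝ) ^ t' * ((2:ℝ) ^ ((b k) + t))⁻¹) := by
          rw [ENNReal.ofReal_mul (by positivity)]
          congr 1
          rw [← ENNReal.ofReal_natCast]
          congr 1
          push_cast
          ring
      _ ≤ ENNReal.ofReal ((2:ℝ) ^ (a k) * ((2:ℝ) ^ (b k))⁻¹) := by
          apply ENNReal.ofReal_le_ofReal
          have hle1 : (2:ℝ) ^ t' ≤ 2 ^ (a k + t) := by
            apply pow_le_pow_right₀ (by norm_num)
            omega
          have h2t : (0:ℝ) < 2 ^ t := by positivity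
          have heq : (2:ℝ) ^ (a k + t) * ((2:ℝ) ^ (b k + t))⁻¹
              = (2:ℝ) ^ (a k) * ((2:ℝ) ^ (b k))⁻¹ := by
            rw [pow_add, pow_add, mul_inv]
            field_simp
          calc (2:ℝ) ^ t' * ((2:ℝ) ^ ((b k) + t))⁻¹
                ≤ (2:ℝ) ^ (a k + t) * ((2:ℝ) ^ ((b k) + t))⁻¹ := by
                  apply mul_le_mul_of_nonneg_right hle1 (by positivity)
            _ = _ := heq
  exact Filter.liminf_le_of_frequently_le' (htend.frequently (Filter.Frequently.of_forall hkey))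

end KeyBound
section Pigeon

variable {s : ℝ} {a b : ℕ → ℕ}

lemma Fset_mem_locF (hs : 0 < s) (hs1 : s ≤ 1)
    (ha : StrictMono a) (hb : StrictMono b) (ha0 : a 0 = 1) (hb0 : b 0 = 1)
    (hapos : ∀ i, 0 < a i) (hbpos : ∀ i, 0 < b i)
    (hab : ∀ i j, i ≤ j → a j - a i ≤ b j - b i)
    (m : ℕ) {x : ℝ} (hx : x ∈ Fset s a b) :
    ∃ p : List Bool, p.length = m ∧ x ∈ locF s a b p := by
  have hx' : ∀ n, ∃ w : List Bool, w.length = n ∧ x ∈ Vset s a b w := by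
    intro n
    have := Set.mem_iInter.mp hx n
    simpa [FsetN] using this
  choose W hWlen hWmem using hx'
  have hnest : ∀ n j, x ∈ Vset s a b ((W n).take j) := fun n j =>
    Vset_take_subset hs hs1 ha hb ha0 hb0 hapos hbpos hab (W n) j (hWmem n)
  have hglen : ∀ n : ℕ, ((W (n + m)).take m).length = m := by
    intro n; rw [List.length_take, hWlen]; omega
  have hglt : ∀ n : ℕ, listToNat ((W (n + m)).take m) < 2 ^ m := by
    intro n
    have := listToNat_lt ((W (n + m)).take m)
    rwa [hglen n] at this
  set g : ℕ → Fin (2 ^ m) := fun n => ⟨listToNat ((W (n + m)).take m), hglt n⟩ with hgdef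
  obtain ⟨y, hy⟩ := Finite.exists_infinite_fiber g
  set p : List Bool := wordOf m (y : ℕ) with hpdef
  have hplen : p.length = m := wordOf_length m _
  refine ⟨p, hplen, ?_⟩
  apply Set.mem_iInter.mpr
  intro t
  have hfib : (g ⁻¹' {y}).Infinite := Set.infinite_coe_iff.mp hy
  obtain ⟨n, hn, hnt⟩ := hfib.exists_gt t
  have hgn : listToNat ((W (n + m)).take m) = (y : ℕ) := by
    have : g n = y := hn
    exact congrArg Fin.val this
  have hp : (W (n + m)).take m = p := by
    have h1 := wordOf_listToNat ((W (n + m)).take m)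
    rw [hglen n, hgn] at h1
    rw [hpdef, ← h1]
  have hsplit : (W (n + m)).take (m + t) = p ++ ((W (n + m)).drop m).take t := by
    rw [List.take_add, hp]
  have hqlen : (((W (n + m)).drop m).take t).length = t := by
    rw [List.length_take, List.length_drop, hWlen]; omega
  apply Set.mem_iUnion.mpr
  refine ⟨((W (n + m)).drop m).take t, Set.mem_iUnion.mpr ⟨hqlen, ?_⟩⟩
  rw [← hsplit]
  exact hnest (n + m) (m + t)

end Pigeon
lemma two_mul_le_pow (m : ℕ) : 2 * m ≤ 2 ^ m + 1 := by
  induction m with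
  | zero => simp
  | succ m ih =>
    rcases Nat.eq_zero_or_pos m with h | h
    · subst h; norm_num
    · have h2 : (2:ℕ) ≤ 2 ^ m := by
        calc (2:ℕ) = 2 ^ 1 := rfl
        _ ≤ 2 ^ m := Nat.pow_le_pow_right (by norm_num) h
      have h3 : (2:ℕ) ^ (m + 1) = 2 ^ m + 2 ^ m := by rw [pow_succ]; ring
      omega

lemma bounded_Vset (s : ℝ) (a b : ℕ → ℕ) (w : List Bool) :
    Bornology.IsBounded (Vset s a b w) := by
  unfold Vset; exact Metric.isBounded_Icc _ _

/-- the `s`-dimensional lower Hewitt–Stromberg measure of `F(s,a,b)` is zero. -/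
theorem statement19 (s : ℝ) (hs : 0 < s) (hs1 : s ≤ 1)
    (a b : ℕ → ℕ) (ha : StrictMono a) (hb : StrictMono b)
    (hapos : ∀ i, 0 < a i) (hbpos : ∀ i, 0 < b i)
    (ha0 : a 0 = 1) (hb0 : b 0 = 1)
    (hab : ∀ i j, i ≤ j → a j - a i ≤ b j - b i)
    (har : Filter.Tendsto (fun i => (a i : ℝ) / (b i : ℝ)) Filter.atTop (nhds 0))
    (hbr : Filter.Tendsto (fun i => (b i : ℝ) / (a (i+1) : ℝ)) Filter.atTop (nhds 0)) :
    lowerHS s (Fset s a b) = 0 := by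
  have hev : ∀ᶠ k in Filter.atTop, (a k : ℝ) / (b k : ℝ) < 1/2 :=
    har.eventually_lt_const (by norm_num)
  obtain ⟨K₀, hK₀⟩ := Filter.eventually_atTop.mp hev
  have h2ab : ∀ k, K₀ ≤ k → 2 * a k ≤ b k := by
    intro k hk
    have h1 := hK₀ k hk
    have hbk : (0:ℝ) < (b k : ℝ) := by exact_mod_cast hbpos k
    rw [div_lt_iff₀ hbk] at h1
    have h2 : ((2 * a k : ℕ) : ℝ) < ((b k : ℕ) : ℝ) := by push_cast; linarith
    exact_mod_cast h2.le
  have key : ∀ m : ℕ, K₀ ≤ m → lowerHS s (Fset s a b) ≤ ENNReal.ofReal (((2:ℝ) ^ m)⁻¹) := by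
    intro m hm
    set E : ℕ → Set ℝ := fun i => if i < 2 ^ m then locF s a b (wordOf m i) else ∅ with hEdef
    have hEpos : ∀ i, i < 2 ^ m → E i = locF s a b (wordOf m i) := by
      intro i hi; rw [hEdef]; simp only [if_pos hi]
    have hEneg : ∀ i, ¬ i < 2 ^ m → E i = ∅ := by
      intro i hi; rw [hEdef]; simp only [if_neg hi]
    have hcov : Fset s a b ⊆ ⋃ i, E i := by
      intro x hx
      obtain ⟨p, hplen, hxp⟩ := Fset_mem_locF hs hs1 ha hb ha0 hb0 hapos hbpos hab m hx
      have hlt : listToNat p < 2 ^ m := by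
        have := listToNat_lt p; rwa [hplen] at this
      have hwp : wordOf m (listToNat p) = p := by
        have := wordOf_listToNat p; rwa [hplen] at this
      refine Set.mem_iUnion.mpr ⟨listToNat p, ?_⟩
      rw [hEpos _ hlt, hwp]
      exact hxp
    have hbdd : ∀ i, Bornology.IsBounded (E i) := by
      intro i
      by_cases hi : i < 2 ^ m
      · rw [hEpos _ hi]
        exact (bounded_Vset s a b (wordOf m i)).subset (locF_subset_Vset s a b _)
      · rw [hEneg _ hi]
        exact Bornology.isBounded_empty
    have hle1 : lowerHS s (Fset s a b) ≤ ∑' i, lowerHSpre s (E i) := by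
      unfold lowerHS
      exact iInf_le_of_le E (iInf_le_of_le hcov (iInf_le _ hbdd))
    have htsum : ∑' i, lowerHSpre s (E i) = ∑ i ∈ Finset.range (2 ^ m), lowerHSpre s (E i) := by
      apply tsum_eq_sum
      intro i hi
      simp only [Finset.mem_range, not_lt] at hi
      rw [hEneg _ (by omega)]
      exact lowerHSpre_empty s
    have hterm : ∀ i ∈ Finset.range (2 ^ m),
        lowerHSpre s (E i) ≤ ENNReal.ofReal (((2:ℝ) ^ (2 ^ m + 1))⁻¹) := by
      intro i hi
      simp only [Finset.mem_range] at hi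
      rw [hEpos _ hi]
      set k := findex (wordOf m i) with hkdef
      have hk1 : 2 ^ m ≤ k := by
        have := (findex_bounds (wordOf m i)).1
        rwa [wordOf_length] at this
      have hkK : K₀ ≤ k := le_trans (le_trans hm (le_of_lt (Nat.lt_two_pow_self (n := m)))) hk1
      have h2k := h2ab k hkK
      have hak := a_lb ha ha0 k
      have hexp : a k + (2 ^ m + 1) ≤ b k := by omega
      calc lowerHSpre s (locF s a b (wordOf m i))
          ≤ ENNReal.ofReal ((2:ℝ) ^ (a k) * ((2:ℝ) ^ (b k))⁻¹) :=
            lowerHSpre_locF hs hs1 ha hb ha0 hb0 hapos hbpos hab (wordOf m i)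
        _ ≤ ENNReal.ofReal (((2:ℝ) ^ (2 ^ m + 1))⁻¹) := by
            apply ENNReal.ofReal_le_ofReal
            have h1 : (2:ℝ) ^ (a k) * (2:ℝ) ^ (2 ^ m + 1) ≤ (2:ℝ) ^ (b k) := by
              rw [← pow_add]
              exact pow_le_pow_right₀ (by norm_num) hexp
            calc (2:ℝ) ^ (a k) * ((2:ℝ) ^ (b k))⁻¹
                ≤ (2:ℝ) ^ (a k) * (((2:ℝ) ^ (a k) * (2:ℝ) ^ (2 ^ m + 1)))⁻¹ := by
                  apply mul_le_mul_of_nonneg_left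
                    (inv_anti₀ (by positivity) h1) (by positivity)
              _ = ((2:ℝ) ^ (2 ^ m + 1))⁻¹ := by
                  rw [mul_inv]
                  rw [← mul_assoc, mul_inv_cancel₀ (by positivity), one_mul]
    have hsum : ∑ i ∈ Finset.range (2 ^ m), lowerHSpre s (E i)
        ≤ (2 ^ m : ℕ) • ENNReal.ofReal (((2:ℝ) ^ (2 ^ m + 1))⁻¹) := by
      have := Finset.sum_le_card_nsmul (Finset.range (2 ^ m)) _ _ hterm
      simpa using this
    have hfinal : (2 ^ m : ℕ) • ENNReal.ofReal (((2:ℝ) ^ (2 ^ m + 1))⁻¹)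
        ≤ ENNReal.ofReal (((2:ℝ) ^ m)⁻¹) := by
      rw [nsmul_eq_mul]
      have hcast : ((2 ^ m : ℕ) : ℝ≥0∞) = ENNReal.ofReal ((2:ℝ) ^ m) := by
        rw [← ENNReal.ofReal_natCast]
        congr 1
        push_cast
        ring
      rw [hcast, ← ENNReal.ofReal_mul (by positivity)]
      apply ENNReal.ofReal_le_ofReal
      have h1 : (2:ℝ) ^ m * (2:ℝ) ^ m ≤ (2:ℝ) ^ (2 ^ m + 1) := by
        rw [← pow_add]
        apply pow_le_pow_right₀ (by norm_num)
        have := two_mul_le_pow m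
        omega
      calc (2:ℝ) ^ m * ((2:ℝ) ^ (2 ^ m + 1))⁻¹
          ≤ (2:ℝ) ^ m * ((2:ℝ) ^ m * (2:ℝ) ^ m)⁻¹ := by
            apply mul_le_mul_of_nonneg_left
              (inv_anti₀ (by positivity) h1) (by positivity)
        _ = ((2:ℝ) ^ m)⁻¹ := by
            rw [mul_inv, ← mul_assoc, mul_inv_cancel₀ (by positivity), one_mul]
    calc lowerHS s (Fset s a b) ≤ ∑' i, lowerHSpre s (E i) := hle1
      _ = ∑ i ∈ Finset.range (2 ^ m), lowerHSpre s (E i) := htsum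
      _ ≤ (2 ^ m : ℕ) • ENNReal.ofReal (((2:ℝ) ^ (2 ^ m + 1))⁻¹) := hsum
      _ ≤ ENNReal.ofReal (((2:ℝ) ^ m)⁻¹) := hfinal
  have htends : Filter.Tendsto (fun m : ℕ => ENNReal.ofReal (((2:ℝ) ^ m)⁻¹))
      Filter.atTop (𝓝 0) := by
    have h0 : Filter.Tendsto (fun m : ℕ => ((2:ℝ)⁻¹) ^ m) Filter.atTop (𝓝 0) :=
      tendsto_pow_atTop_nhds_zero_of_lt_one (by norm_num) (by norm_num)
    have h1 : Filter.Tendsto (fun m : ℕ => (((2:ℝ)) ^ m)⁻¹) Filter.atTop (𝓝 0) := by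
      simpa [inv_pow] using h0
    have h2 := (ENNReal.continuous_ofReal.tendsto 0).comp h1
    rw [ENNReal.ofReal_zero] at h2
    exact h2
  have hfin : lowerHS s (Fset s a b) ≤ 0 :=
    ge_of_tendsto htends (Filter.eventually_atTop.mpr ⟨K₀, fun m hm => key m hm⟩)
  exact le_antisymm hfin (zero_le)

end
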